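/- Every edge of the hypercube Q_n (n ≥ 2) lies on a cycle of every even length l with 4 ≤ l ≤ 2^n. -/

import Mathlib

open SimpleGraph

/-- The `n`-dimensional hypercube: vertices are binary strings of length `n`
(indexed so that bit `i+1` of the paper is index `i`), adjacent iff they
differ in exactly one bit. -/
def hypercube (n : ℕ) : SimpleGraph (Fin n → Bool) where
  Adj u v := ∃! i, u i ≠ v i
  symm := ⟨by
    rintro u v ⟨i, hi, hu⟩
    exact ⟨i, hi.symm, fun j hj => hu j hj.symm⟩⟩
  loopless := ⟨by
    rintro u ⟨i, hi, -⟩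
    exact hi rfl⟩

/-- Skip relation: `u` and `v` differ exactly in the last `k` bits
(indices `0, …, k-1`). -/
def skipRel (n k : ℕ) (u v : Fin n → Bool) : Prop :=
  u ≠ v ∧ ∀ i : Fin n, (i.val < k → u i ≠ v i) ∧ (k ≤ i.val → u i = v i)

/-- The enhanced hypercube `Q_{n,k}`: hypercube edges together with skip edges. -/
def enhanced (n k : ℕ) : SimpleGraph (Fin n → Bool) where
  Adj u v := (hypercube n).Adj u v ∨ skipRel n k u v
  symm := ⟨by
    rintro u v (h | ⟨hne, h⟩)
    · exact Or.inl ((hypercube n).adj_symm h)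
    · exact Or.inr ⟨hne.symm, fun i =>
        ⟨fun hi => ((h i).1 hi).symm, fun hi => ((h i).2 hi).symm⟩⟩⟩
  loopless := ⟨by
    rintro u (h | ⟨hne, -⟩)
    · exact (hypercube n).irrefl h
    · exact hne rfl⟩

/-- The folded hypercube `FQ_n`: hypercube edges together with complementary edges. -/
def folded (n : ℕ) : SimpleGraph (Fin n → Bool) where
  Adj u v := (hypercube n).Adj u v ∨ (u ≠ v ∧ ∀ i, u i ≠ v i)
  symm := ⟨by
    rintro u v (h | ⟨hne, h⟩)
    · exact Or.inl ((hypercube n).adj_symm h)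
    · exact Or.inr ⟨hne.symm, fun i => (h i).symm⟩⟩
  loopless := ⟨by
    rintro u (h | ⟨hne, -⟩)
    · exact (hypercube n).irrefl h
    · exact hne rfl⟩

/-- The Cartesian product `K₂ × G`: two copies of `G` joined by crossing edges. -/
def K2Prod {V : Type*} (G : SimpleGraph V) : SimpleGraph (Bool × V) :=
  (completeGraph Bool) □ G

/-- The edge `e` lies on a cycle of length `l` in `G`. -/
def EdgeOnCycle {V : Type*} (G : SimpleGraph V) (e : Sym2 V) (l : ℕ) : Prop :=
  ∃ (v : V) (c : G.Walk v v), c.IsCycle ∧ c.length = l ∧ e ∈ c.edges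

/-!
Let the edge join `u` and `v`, which differ in coordinate `p`. Deleting coordinate `p` splits
`Q_{k+1}` into two copies ("layers") of `Q_k`, and `u`, `v` are the copies of one vertex `x`.
A path `P` in `Q_k` from `x` with `m` vertices, run forward in the layer of `u`, across to the
other layer and back in reverse, closes up through the edge `vu` into a cycle of length `2m`.
Such paths exist for every `m ≤ 2^k`, by the same layer-crossing construction with `p = 0`
(a reflected Gray code).
-/

namespace Fin

lemma existsUnique_iff_succAbove {k : ℕ} {P : Fin (k + 1) → Prop} {p : Fin (k + 1)}
    (hp : ¬P p) :
    (∃! i, P i) ↔ ∃! j, P (p.succAbove j) := by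
  constructor
  · rintro ⟨i, hi, huniq⟩
    obtain rfl | ⟨j, rfl⟩ := eq_self_or_eq_succAbove p i
    · exact absurd hi hp
    · exact ⟨j, hi, fun j' hj' => succAbove_right_injective (huniq _ hj')⟩
  · rintro ⟨j, hj, huniq⟩
    refine ⟨p.succAbove j, hj, fun i hi => ?_⟩
    obtain rfl | ⟨j', rfl⟩ := eq_self_or_eq_succAbove p i
    · exact absurd hi hp
    · rw [huniq j' hi]

end Fin

namespace SimpleGraph.Walk

variable {V : Type*} {G : SimpleGraph V} {a b c d : V}

lemma IsPath.append_cons {p : G.Walk a b} {q : G.Walk c d} (hp : p.IsPath) (hq : q.IsPath)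
    (h : G.Adj b c) (hpq : p.support.Disjoint q.support) : (p.append (cons h q)).IsPath := by
  rw [isPath_def, support_append, support_cons, List.tail_cons, List.nodup_append']
  exact ⟨hp.support_nodup, hq.support_nodup, hpq⟩

end SimpleGraph.Walk

open Walk

section Hypercube

variable {k : ℕ}

def hypercubeLayer (p : Fin (k + 1)) (b : Bool) : hypercube k ↪g hypercube (k + 1) where
  toFun x := (Fin.insertNth p b x : Fin (k + 1) → Bool)
  inj' := Fin.insertNth_right_injective (α := fun _ => Bool) b
  map_rel_iff' {x y} := by
    change (∃! i, Fin.insertNth (α := fun _ => Bool) p b x i ≠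
      Fin.insertNth (α := fun _ => Bool) p b y i) ↔
      ∃! j, x j ≠ y j
    rw [Fin.existsUnique_iff_succAbove (p := p) (by simp)]
    simp only [Fin.insertNth_apply_succAbove]

lemma hypercubeLayer_apply (p : Fin (k + 1)) (b : Bool) (x : Fin k → Bool) :
    hypercubeLayer p b x = Fin.insertNth p b x := rfl

lemma hypercube_adj_layer_not (p : Fin (k + 1)) (b : Bool) (x : Fin k → Bool) :
    (hypercube (k + 1)).Adj (hypercubeLayer p b x) (hypercubeLayer p (!b) x) := by
  refine ⟨p, by simp [hypercubeLayer_apply], fun i hi => ?_⟩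
  obtain rfl | ⟨j, rfl⟩ := Fin.eq_self_or_eq_succAbove p i
  · rfl
  · simp [hypercubeLayer_apply] at hi

lemma exists_eq_hypercubeLayer_of_adj {u v : Fin (k + 1) → Bool}
    (h : (hypercube (k + 1)).Adj u v) :
    ∃ p b x, u = hypercubeLayer p b x ∧ v = hypercubeLayer p (!b) x := by
  obtain ⟨p, hp, huniq⟩ := h
  refine ⟨p, u p, p.removeNth u, (Fin.insertNth_self_removeNth p u).symm, ?_⟩
  rw [hypercubeLayer_apply, Fin.eq_insertNth_iff]
  refine ⟨Bool.eq_not.mpr (Ne.symm hp), funext fun j => ?_⟩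
  by_contra hj
  exact Fin.succAbove_ne p j (huniq _ (Ne.symm hj))

lemma disjoint_support_map_hypercubeLayer {x c y d : Fin k → Bool} (p : Fin (k + 1)) (b : Bool)
    (P : (hypercube k).Walk x c) (R : (hypercube k).Walk y d) :
    (P.map (hypercubeLayer p b).toHom).support.Disjoint
      (R.map (hypercubeLayer p (!b)).toHom).support := by
  simp only [Walk.support_map, List.disjoint_left, List.mem_map]
  rintro _ ⟨x, -, rfl⟩ ⟨y, -, hyx⟩
  simpa [hypercubeLayer_apply] using congrFun hyx p

def layerCrossWalk {x c d : Fin k → Bool} (p : Fin (k + 1)) (b : Bool)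
    (P : (hypercube k).Walk x c) (R : (hypercube k).Walk c d) :
    (hypercube (k + 1)).Walk (hypercubeLayer p b x) (hypercubeLayer p (!b) d) :=
  (P.map (hypercubeLayer p b).toHom).append
    (cons (hypercube_adj_layer_not p b c) (R.map (hypercubeLayer p (!b)).toHom))

lemma layerCrossWalk_length {x c d : Fin k → Bool} (p : Fin (k + 1)) (b : Bool)
    (P : (hypercube k).Walk x c) (R : (hypercube k).Walk c d) :
    (layerCrossWalk p b P R).length = P.length + R.length + 1 := by
  simp only [layerCrossWalk, length_append, length_cons, length_map]
  omega

lemma isPath_layerCrossWalk {x c d : Fin k → Bool} (p : Fin (k + 1)) (b : Bool)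
    {P : (hypercube k).Walk x c} {R : (hypercube k).Walk c d} (hP : P.IsPath) (hR : R.IsPath) :
    (layerCrossWalk p b P R).IsPath :=
  (hP.map (hypercubeLayer p b).injective).append_cons (hR.map (hypercubeLayer p (!b)).injective) _
    (disjoint_support_map_hypercubeLayer p b P R)

theorem hypercube_exists_isPath_length (x : Fin k → Bool) {m : ℕ} (hm : m < 2 ^ k) :
    ∃ c, ∃ P : (hypercube k).Walk x c, P.IsPath ∧ P.length = m := by
  induction k generalizing m with
  | zero => exact ⟨x, nil, .nil, by simp at hm ⊢; omega⟩
  | succ k ih =>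
    obtain ⟨b, x', rfl⟩ : ∃ b x', hypercubeLayer 0 b x' = x :=
      ⟨x 0, Fin.removeNth 0 x, Fin.insertNth_self_removeNth 0 x⟩
    by_cases hmk : m < 2 ^ k
    · obtain ⟨c, P, hP, hPlen⟩ := ih x' hmk
      exact ⟨_, P.map (hypercubeLayer 0 b).toHom, hP.map (hypercubeLayer 0 b).injective,
        by rw [length_map, hPlen]⟩
    · obtain ⟨c, P, hP, hPlen⟩ := ih x' (Nat.sub_lt (Nat.two_pow_pos k) one_pos)
      obtain ⟨d, R, hR, hRlen⟩ := ih c (m := m - 2 ^ k) (by rw [pow_succ] at hm; omega)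
      refine ⟨_, layerCrossWalk 0 b P R, isPath_layerCrossWalk 0 b hP hR, ?_⟩
      rw [layerCrossWalk_length]
      have := Nat.two_pow_pos k
      omega

theorem hypercube_edgeOnCycle {e : Sym2 (Fin (k + 1) → Bool)}
    (he : e ∈ (hypercube (k + 1)).edgeSet)
    {m : ℕ} (h2m : 2 ≤ m) (hmk : m ≤ 2 ^ k) : EdgeOnCycle (hypercube (k + 1)) e (2 * m) := by
  induction e using Sym2.ind with
  | _ u v =>
  obtain ⟨p, b, x, rfl, rfl⟩ := exists_eq_hypercubeLayer_of_adj he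
  obtain ⟨c, P, hP, hPlen⟩ := hypercube_exists_isPath_length x (m := m - 1) (by omega)
  have hQ := isPath_layerCrossWalk p b hP hP.reverse
  have hQlen := layerCrossWalk_length p b P P.reverse
  rw [length_reverse] at hQlen
  refine ⟨_, cons (hypercube_adj_layer_not p b x).symm (layerCrossWalk p b P P.reverse),
    ?_, ?_, ?_⟩
  · rw [cons_isCycle_iff]
    refine ⟨hQ, fun hmem => ?_⟩
    have := hQ.length_eq_one_of_mem_edges (Sym2.eq_swap ▸ hmem)
    omega
  · rw [length_cons]
    omega
  · rw [edges_cons, Sym2.eq_swap]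
    exact List.mem_cons_self

end Hypercube

theorem stmt9_general (n : ℕ) :
    ∀ e ∈ (hypercube n).edgeSet, ∀ l : ℕ, Even l → 4 ≤ l → l ≤ 2 ^ n →
      EdgeOnCycle (hypercube n) e l := by
  rintro e he l ⟨m, rfl⟩ h4 hl
  cases n with
  | zero => simp at hl; omega
  | succ k =>
    rw [← two_mul]
    exact hypercube_edgeOnCycle he (by omega) (by rw [pow_succ] at hl; omega)

/-- Every edge of `Q_n` (`n ≥ 2`) lies on a cycle of every even length `l` with
`4 ≤ l ≤ 2^n`. -/
theorem stmt9 (n : ℕ) (hn : 2 ≤ n) :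
    ∀ e ∈ (hypercube n).edgeSet, ∀ l : ℕ, Even l → 4 ≤ l → l ≤ 2 ^ n →
      EdgeOnCycle (hypercube n) e l :=
  stmt9_general n
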